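/- arXiv:2005.07187 — 2 statements merged into one kernel-verified Lean document; each statement's English description precedes it below -/
import Mathlib

section
/- Let P be an N-element poset, let x ∈ P, and let X = {y ∈ P : y <_P x}. Suppose that every element of P that is comparable with some element of X is also comparable with x. If L and L̃ are labelings of P with L|_{P∖X} = L̃|_{P∖X}, then for every integer γ ≥ 0 the label sets ∂^γ(L)(X) and ∂^γ(L̃)(X) are equal; that is, the set ∂^γ(L)(X) depends only on the set L(X) and the restriction L|_{P∖X}, not on how the labels in L(X) are distributed among the elements of X. -/
open scoped Classical

noncomputable section

abbrev Labeling (P : Type*) [Fintype P] : Type _ := P ≃ Fin (Fintype.card P)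

variable {P : Type*} [Fintype P] [PartialOrder P]

def IsLinearExt (L : Labeling P) : Prop := ∀ x y : P, x ≤ y → L x ≤ L y

def lSucc (L : Labeling P) (v : P)
    (h : (Finset.univ.filter fun y => v < y).Nonempty) : P :=
  L.symm (((Finset.univ.filter fun y => v < y).image L).min' (h.image _))

lemma lt_lSucc (L : Labeling P) (v : P)
    (h : (Finset.univ.filter fun y => v < y).Nonempty) : v < lSucc L v h := by
  have hmem := Finset.min'_mem ((Finset.univ.filter fun y => v < y).image L) (h.image _)
  obtain ⟨y, hy, hLy⟩ := Finset.mem_image.mp hmem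
  have heq : lSucc L v h = y := by
    unfold lSucc
    rw [← hLy, Equiv.symm_apply_apply]
  rw [heq]
  exact (Finset.mem_filter.mp hy).2

def promChainFrom (L : Labeling P) (v : P) : List P :=
  if h : (Finset.univ.filter fun y => v < y).Nonempty then
    v :: promChainFrom L (lSucc L v h)
  else [v]
termination_by (Finset.univ.filter fun y => v < y).card
decreasing_by
  apply Finset.card_lt_card
  refine (Finset.ssubset_iff_of_subset ?_).mpr ?_
  · intro z hz
    simp only [Finset.mem_filter, Finset.mem_univ, true_and] at *
    exact lt_trans (lt_lSucc L v h) hz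
  · exact ⟨lSucc L v h, by simp [lt_lSucc L v h], by simp⟩

def promote (L : Labeling P) : Labeling P :=
  if h : Nonempty P then
    ((List.formPerm (promChainFrom L (L.symm ⟨0, @Fintype.card_pos P _ h⟩))).trans L).trans
      (finRotate (Fintype.card P)).symm
  else L

/-- The label of `x` under `L`, as an integer in `{1, …, n}`. -/
def labelOf (L : Labeling P) (x : P) : ℕ := (L x : ℕ) + 1

/-- The largest `a ∈ {0, …, n}` such that for all `j ∈ {n−a+1, …, n}`, the set
`{x ∈ P : j ≤ L(x) ≤ n}` is an upper order ideal of `P`. -/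
def frozenA (L : Labeling P) : ℕ :=
  sSup {a : ℕ | a ≤ Fintype.card P ∧
    ∀ j, Fintype.card P - a + 1 ≤ j → j ≤ Fintype.card P →
      IsUpperSet {x : P | j ≤ labelOf L x ∧ labelOf L x ≤ Fintype.card P}}

/-- `x` is frozen with respect to `L` if `n − a + 1 ≤ L(x) ≤ n`, where `a` is as in `frozenA`. -/
def IsFrozen (L : Labeling P) (x : P) : Prop :=
  Fintype.card P - frozenA L + 1 ≤ labelOf L x

/-- A labeling of an `n`-element poset is tangled if `n ≥ 2` and `∂^{n−2}(L)` is
not a linear extension. -/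
def IsTangled (L : Labeling P) : Prop :=
  2 ≤ Fintype.card P ∧ ¬ IsLinearExt (promote^[Fintype.card P - 2] L)

/-- A labeling of an `n`-element poset is `k`-untangled if `n ≥ k + 2` and
`∂^{n−k−2}(L)` is not a linear extension. -/
def IsUntangled (k : ℕ) (L : Labeling P) : Prop :=
  k + 2 ≤ Fintype.card P ∧ ¬ IsLinearExt (promote^[Fintype.card P - k - 2] L)

/-- The comparability graph of a poset. -/
def compGraph (P : Type*) [PartialOrder P] : SimpleGraph P where
  Adj x y := x ≠ y ∧ (x ≤ y ∨ y ≤ x)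
  symm := by
    constructor
    intro x y hxy
    exact ⟨hxy.1.symm, hxy.2.symm⟩
  loopless := by
    constructor
    intro x hx
    exact hx.1 rfl

/-- The standardization of an injective map from a finite type into a linear order:
the unique relabeling by `{1, …, n}` with the same relative order of values. -/
def standardize {R β : Type*} [Fintype R] [LinearOrder β]
    (f : R → β) (hf : Function.Injective f) : R ≃ Fin (Fintype.card R) :=
  have hcard : (Finset.univ.image f).card = Fintype.card R := by
    rw [Finset.card_image_of_injective _ hf, Finset.card_univ]
  (Equiv.ofBijective (fun x => (⟨f x, by simp⟩ : ↥(Finset.univ.image f)))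
    (by
      rw [Fintype.bijective_iff_injective_and_card]
      refine ⟨fun a b hab => hf (congrArg Subtype.val hab), ?_⟩
      rw [Fintype.card_coe, hcard])).trans
    ((Finset.univ.image f).orderIsoOfFin hcard).symm.toEquiv

/-- The toggle operator `τ_{k+1}`: it swaps the labels `k+1` and `k+2` (i.e. the
`Fin`-labels `k` and `k+1`) unless `L⁻¹(k+1) <_P L⁻¹(k+2)`. -/
def toggle (L : Labeling P) (k : ℕ) : Labeling P :=
  if h : k + 1 < Fintype.card P then
    if L.symm ⟨k, Nat.lt_of_succ_lt h⟩ < L.symm ⟨k + 1, h⟩ then L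
    else L.trans (Equiv.swap ⟨k, Nat.lt_of_succ_lt h⟩ ⟨k + 1, h⟩)
  else L

/-- An element `x` is `L`-golden if every element strictly above it has a larger label. -/
def IsGolden (L : Labeling P) (x : P) : Prop := ∀ y : P, x < y → L x < L y

/-- The largest label `n` of an `n`-element poset, as an element of `Fin n`. -/
def topFin (P : Type*) [Fintype P] [Nonempty P] : Fin (Fintype.card P) :=
  ⟨Fintype.card P - 1, Nat.sub_lt Fintype.card_pos Nat.one_pos⟩

/-!
Let `X` be the set of elements strictly below `x`. The promotion chain of a labeling
leaves `X` at most once: an element above some `w ∈ X` is comparable with `x` and, if it is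
not in `X`, lies above `x`; hence the first element of the chain outside `X` is the element
of `{z | x ≤ z}` with the smallest label. From there on the chain, its successors and their
labels depend only on the labels outside `X`, while the maximal element ending the chain
receives the label `N` whatever the chain. So one promotion step preserves agreement of two
labelings outside `X`, and two bijections that agree outside `X` map `X` onto the same set.
-/

section Equiv

variable {α β : Type*} {e e' : α ≃ β} {s : Set α}

theorem Equiv.symm_apply_eq_of_eqOn_compl (h : Set.EqOn e e' sᶜ) {b : β} (hb : e.symm b ∉ s) :
    e'.symm b = e.symm b :=
  e'.symm_apply_eq.mpr (by rw [← h hb, e.apply_symm_apply])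

theorem Equiv.image_eq_of_eqOn_compl (h : Set.EqOn e e' sᶜ) : e '' s = e' '' s :=
  compl_injective (by rw [← e.image_compl, ← e'.image_compl, h.image_eq])

end Equiv

section MinLabel

variable {α β : Type*} [LinearOrder β]

def minLabel (e : α ≃ β) (s : Finset α) (hs : s.Nonempty) : α :=
  e.symm ((s.image e).min' (hs.image e))

theorem minLabel_mem (e : α ≃ β) {s : Finset α} (hs : s.Nonempty) : minLabel e s hs ∈ s := by
  obtain ⟨y, hy, hey⟩ := Finset.mem_image.mp (Finset.min'_mem _ (hs.image e))
  rwa [minLabel, ← hey, e.symm_apply_apply]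

theorem apply_minLabel_le (e : α ≃ β) {s : Finset α} (hs : s.Nonempty) {z : α} (hz : z ∈ s) :
    e (minLabel e s hs) ≤ e z := by
  rw [minLabel, e.apply_symm_apply]
  exact Finset.min'_le _ _ (Finset.mem_image_of_mem e hz)

theorem minLabel_eq_of_forall_le (e : α ≃ β) {s : Finset α} (hs : s.Nonempty) {y : α}
    (hy : y ∈ s) (h : ∀ z ∈ s, e y ≤ e z) : minLabel e s hs = y :=
  e.injective ((apply_minLabel_le e hs hy).antisymm (h _ (minLabel_mem e hs)))

theorem minLabel_congr {e e' : α ≃ β} {s : Finset α} (hs : s.Nonempty)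
    (h : ∀ z ∈ s, e z = e' z) : minLabel e s hs = minLabel e' s hs := by
  refine (minLabel_eq_of_forall_le e' hs (minLabel_mem e hs) fun z hz => ?_).symm
  rw [← h _ (minLabel_mem e hs), ← h z hz]
  exact apply_minLabel_le e hs hz

theorem minLabel_eq_of_subset (e : α ≃ β) {s t : Finset α} (hs : s.Nonempty) (ht : t.Nonempty)
    (hst : s ⊆ t) (hmem : minLabel e t ht ∈ s) : minLabel e s hs = minLabel e t ht :=
  minLabel_eq_of_forall_le e hs hmem fun _ hz => apply_minLabel_le e ht (hst hz)

end MinLabel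

section PromotionChain

theorem lSucc_eq_minLabel (L : Labeling P) (v : P)
    (h : (Finset.univ.filter fun y => v < y).Nonempty) :
    lSucc L v h = minLabel L _ h := rfl

theorem card_upper_lSucc_lt (L : Labeling P) (v : P)
    (h : (Finset.univ.filter fun y => v < y).Nonempty) :
    (Finset.univ.filter fun y => lSucc L v h < y).card <
      (Finset.univ.filter fun y => v < y).card := by
  refine Finset.card_lt_card ((Finset.ssubset_iff_of_subset fun z hz => ?_).mpr
    ⟨lSucc L v h, by simp [lt_lSucc L v h], by simp⟩)
  simp only [Finset.mem_filter, Finset.mem_univ, true_and] at hz ⊢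
  exact (lt_lSucc L v h).trans hz

theorem promChainFrom_eq_cons (L : Labeling P) (v : P) : ∃ t, promChainFrom L v = v :: t := by
  rw [promChainFrom]
  split_ifs <;> exact ⟨_, rfl⟩

theorem le_of_mem_promChainFrom (L : Labeling P) {v w : P} (hw : w ∈ promChainFrom L v) :
    v ≤ w := by
  rw [promChainFrom] at hw
  split_ifs at hw with h
  · rcases List.mem_cons.mp hw with rfl | hw
    · exact le_rfl
    · exact (lt_lSucc L v h).le.trans (le_of_mem_promChainFrom L hw)
  · rw [List.mem_singleton.mp hw]
termination_by (Finset.univ.filter fun y => v < y).card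
decreasing_by exact card_upper_lSucc_lt L v h

theorem formPerm_promChainFrom_apply (L : Labeling P) {v z : P}
    (hz : z ∈ promChainFrom L v) :
    (promChainFrom L v).formPerm z =
      if h : (Finset.univ.filter fun y => z < y).Nonempty then lSucc L z h else v := by
  rw [promChainFrom] at hz ⊢
  by_cases hv : (Finset.univ.filter fun y => v < y).Nonempty
  · rw [dif_pos hv] at hz ⊢
    set s := lSucc L v hv
    have hvs : v < s := lt_lSucc L v hv
    obtain ⟨t, ht⟩ := promChainFrom_eq_cons L s
    rw [ht, List.formPerm_cons_cons, Equiv.Perm.mul_apply]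
    rcases List.mem_cons.mp hz with rfl | hz
    · have hv_notMem : z ∉ s :: t := fun hmem =>
        (hvs.trans_le (le_of_mem_promChainFrom L (ht ▸ hmem))).false
      rw [List.formPerm_apply_of_notMem hv_notMem, Equiv.swap_apply_left, dif_pos hv]
    · have ih := formPerm_promChainFrom_apply L hz
      have hsz : s ≤ z := le_of_mem_promChainFrom L hz
      rw [ht] at ih
      rw [ih]
      split_ifs with hup
      · exact Equiv.swap_apply_of_ne_of_ne
          (hvs.trans_le (hsz.trans (lt_lSucc L z hup).le)).ne'
          (hsz.trans_lt (lt_lSucc L z hup)).ne'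
      · exact Equiv.swap_apply_right _ _
  · rw [dif_neg hv] at hz ⊢
    rw [List.mem_singleton.mp hz, List.formPerm_singleton, dif_neg hv]
    rfl
termination_by (Finset.univ.filter fun y => v < y).card
decreasing_by exact card_upper_lSucc_lt L v hv

theorem promChainFrom_congr {L L' : Labeling P} {v : P} (h : Set.EqOn L L' (Set.Ici v)) :
    promChainFrom L v = promChainFrom L' v := by
  rw [promChainFrom, promChainFrom]
  split_ifs with hv
  · have hs : lSucc L v hv = lSucc L' v hv :=
      minLabel_congr hv fun z hz => h (Finset.mem_filter.mp hz).2.le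
    have ih : promChainFrom L (lSucc L v hv) = promChainFrom L' (lSucc L v hv) :=
      promChainFrom_congr fun z hz => h ((lt_lSucc L v hv).le.trans hz)
    rw [ih, hs]
  · rfl
termination_by (Finset.univ.filter fun y => v < y).card
decreasing_by exact card_upper_lSucc_lt L v hv

theorem promote_apply [Nonempty P] (L : Labeling P) (z : P) :
    promote L z = (finRotate (Fintype.card P)).symm
      (L ((promChainFrom L (L.symm ⟨0, Fintype.card_pos⟩)).formPerm z)) := by
  rw [promote, dif_pos ‹_›]
  rfl

end PromotionChain

section StrictLowerSet

variable {x : P}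

def minLabelAbove (L : Labeling P) (x : P) : P :=
  minLabel L (Finset.univ.filter fun z => x ≤ z) ⟨x, by simp⟩

theorem lSucc_eq_minLabelAbove
    (hcomp : ∀ z : P, (∃ w ∈ Set.Iio x, z ≤ w ∨ w ≤ z) → (z ≤ x ∨ x ≤ z))
    (L : Labeling P) {v : P} (hv : v < x) (h : (Finset.univ.filter fun y => v < y).Nonempty)
    (hs : ¬ lSucc L v h < x) : lSucc L v h = minLabelAbove L x := by
  have hxs : x ≤ lSucc L v h := by
    rcases hcomp _ ⟨v, hv, Or.inr (lt_lSucc L v h).le⟩ with hle | hge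
    · exact (eq_of_le_of_not_lt hle hs).ge
    · exact hge
  refine (minLabel_eq_of_subset L _ h (fun z hz => ?_) (Finset.mem_filter.mpr ⟨Finset.mem_univ _, hxs⟩)).symm
  simp only [Finset.mem_filter, Finset.mem_univ, true_and] at hz ⊢
  exact hv.trans_le hz

theorem mem_promChainFrom_iff_of_lt
    (hcomp : ∀ z : P, (∃ w ∈ Set.Iio x, z ≤ w ∨ w ≤ z) → (z ≤ x ∨ x ≤ z))
    (L : Labeling P) {v z : P} (hv : v < x) (hz : ¬ z < x) :
    z ∈ promChainFrom L v ↔ z ∈ promChainFrom L (minLabelAbove L x) := by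
  have h : (Finset.univ.filter fun y => v < y).Nonempty := ⟨x, by simpa⟩
  rw [promChainFrom, dif_pos h, List.mem_cons, or_iff_right (by rintro rfl; exact hz hv)]
  by_cases hs : lSucc L v h < x
  · exact mem_promChainFrom_iff_of_lt hcomp L hs hz
  · rw [lSucc_eq_minLabelAbove hcomp L hv h hs]
termination_by (Finset.univ.filter fun y => v < y).card
decreasing_by exact card_upper_lSucc_lt L v h

variable {L L' : Labeling P}

theorem eqOn_Ici_of_eqOn_compl_Iio (h : Set.EqOn L L' (Set.Iio x)ᶜ) {v : P} (hv : ¬ v < x) :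
    Set.EqOn L L' (Set.Ici v) :=
  h.mono fun _ hz hzx => hv (lt_of_le_of_lt hz hzx)

theorem mem_promChainFrom_symm_iff
    (hcomp : ∀ z : P, (∃ w ∈ Set.Iio x, z ≤ w ∨ w ≤ z) → (z ≤ x ∨ x ≤ z))
    (h : Set.EqOn L L' (Set.Iio x)ᶜ) (i : Fin (Fintype.card P)) {z : P} (hz : ¬ z < x) :
    z ∈ promChainFrom L (L.symm i) ↔ z ∈ promChainFrom L' (L'.symm i) := by
  by_cases hi : L.symm i < x
  · have hi' : L'.symm i < x := by
      by_contra hi'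
      exact hi' (Equiv.symm_apply_eq_of_eqOn_compl h.symm hi' ▸ hi)
    have hx : ¬ minLabelAbove L x < x := fun hlt =>
      (lt_of_le_of_lt (Finset.mem_filter.mp (minLabel_mem L _)).2 hlt).false
    have habove : minLabelAbove L x = minLabelAbove L' x :=
      minLabel_congr _ fun _ hz => h (Finset.mem_filter.mp hz).2.not_gt
    rw [mem_promChainFrom_iff_of_lt hcomp L hi hz, mem_promChainFrom_iff_of_lt hcomp L' hi' hz,
      promChainFrom_congr (eqOn_Ici_of_eqOn_compl_Iio h hx), habove]
  · rw [Equiv.symm_apply_eq_of_eqOn_compl h hi, promChainFrom_congr (eqOn_Ici_of_eqOn_compl_Iio h hi)]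

theorem apply_formPerm_promChainFrom_symm_eq
    (hcomp : ∀ z : P, (∃ w ∈ Set.Iio x, z ≤ w ∨ w ≤ z) → (z ≤ x ∨ x ≤ z))
    (h : Set.EqOn L L' (Set.Iio x)ᶜ) (i : Fin (Fintype.card P)) {z : P} (hz : ¬ z < x) :
    L ((promChainFrom L (L.symm i)).formPerm z) =
      L' ((promChainFrom L' (L'.symm i)).formPerm z) := by
  by_cases hmem : z ∈ promChainFrom L (L.symm i)
  · have hmem' := (mem_promChainFrom_symm_iff hcomp h i hz).mp hmem
    rw [formPerm_promChainFrom_apply L hmem, formPerm_promChainFrom_apply L' hmem']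
    split_ifs with hup
    · have hsucc : ¬ lSucc L z hup < x := fun hlt => hz ((lt_lSucc L z hup).trans hlt)
      rw [h hsucc, lSucc_eq_minLabel, lSucc_eq_minLabel,
        minLabel_congr hup fun y hy => h fun hyx => hz ((Finset.mem_filter.mp hy).2.trans hyx)]
    · rw [L.apply_symm_apply, L'.apply_symm_apply]
  · have hmem' : z ∉ promChainFrom L' (L'.symm i) :=
      (mem_promChainFrom_symm_iff hcomp h i hz).not.mp hmem
    rw [List.formPerm_apply_of_notMem hmem, List.formPerm_apply_of_notMem hmem']
    exact h hz

theorem eqOn_promote_of_eqOn_compl_Iio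
    (hcomp : ∀ z : P, (∃ w ∈ Set.Iio x, z ≤ w ∨ w ≤ z) → (z ≤ x ∨ x ≤ z))
    (h : Set.EqOn L L' (Set.Iio x)ᶜ) : Set.EqOn (promote L) (promote L') (Set.Iio x)ᶜ := by
  have : Nonempty P := ⟨x⟩
  intro z hz
  rw [promote_apply, promote_apply, apply_formPerm_promChainFrom_symm_eq hcomp h _ hz]

end StrictLowerSet

/-- Let `X = {y : y <_P x}` and suppose every element comparable with
some element of `X` is comparable with `x`.  If two labelings agree on `P ∖ X`,
then for every `γ ≥ 0` the label sets `∂^γ(L)(X)` and `∂^γ(L̃)(X)` coincide: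
the set `∂^γ(L)(X)` does not depend on how the labels in `L(X)` are distributed
among the elements of `X`. -/
theorem promote_image_of_ideal_eq (x : P) (X : Set P) (hX : X = {y : P | y < x})
    (hcomp : ∀ z : P, (∃ w ∈ X, z ≤ w ∨ w ≤ z) → (z ≤ x ∨ x ≤ z))
    (L L' : Labeling P) (hagree : ∀ z ∉ X, L z = L' z) (γ : ℕ) :
    (promote^[γ] L) '' X = (promote^[γ] L') '' X := by
  subst hX
  refine Equiv.image_eq_of_eqOn_compl (s := Set.Iio x) ?_
  induction γ with
  | zero => exact fun z hz => hagree z hz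
  | succ n ih =>
    simp only [Function.iterate_succ_apply']
    exact eqOn_promote_of_eqOn_compl_Iio hcomp ih

end
end

section
/- Let P be an n-element poset and let L be a labeling of P such that L⁻¹(n) is a maximal element of P. Then the number of labelings L′ of P with ∂(L′) = L equals the number of L-golden chains of P that contain L⁻¹(n). -/
/-!
If `∂ L' = L` and `v₁ < ⋯ < v_m` is the promotion chain of `L'`, then `L'` is recovered from `L`
by undoing the cyclic shift of labels along the chain, and `v_m = L⁻¹(n)`. Under this shift the
minimality of each `L'`-successor `v_{i+1}` becomes, label by label, the `L`-goldenness of `v_i`;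
conversely, undoing the shift along an `L`-golden chain through the maximal element `L⁻¹(n)` gives a
labeling whose promotion chain is that chain. Hence `L' ↦ {v₁, …, v_m}` is a bijection onto the
`L`-golden chains containing `L⁻¹(n)`.
-/

open scoped Classical

noncomputable section

variable {P : Type*} [Fintype P] [PartialOrder P]

section TopLabel

variable {α : Type*} [Fintype α] [Nonempty α]

lemma val_lt_of_ne_topFin {j : Fin (Fintype.card α)} (hj : j ≠ topFin α) :
    (j : ℕ) + 1 < Fintype.card α := by
  have := j.isLt
  have : (j : ℕ) ≠ Fintype.card α - 1 := fun h => hj (Fin.ext h)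
  omega

lemma lt_topFin_of_ne {j : Fin (Fintype.card α)} (hj : j ≠ topFin α) : j < topFin α := by
  have := val_lt_of_ne_topFin hj
  simp only [topFin, Fin.lt_def]
  omega

lemma val_finRotate_of_ne_topFin {j : Fin (Fintype.card α)} (hj : j ≠ topFin α) :
    (finRotate _ j : ℕ) = j + 1 := by
  have := val_lt_of_ne_topFin hj
  rw [finRotate_apply, Fin.val_add, Fin.val_one', Nat.one_mod_eq_one.mpr (by omega),
    Nat.mod_eq_of_lt this]

lemma finRotate_topFin : finRotate _ (topFin α) = ⟨0, Fintype.card_pos⟩ := by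
  have := Fintype.card_pos (α := α)
  ext
  rw [finRotate_apply, Fin.val_add, Fin.val_one', Nat.add_mod_mod]
  simp only [topFin, Nat.sub_add_cancel this, Nat.mod_self]

end TopLabel

namespace List

section FormPerm

variable {α : Type*} [DecidableEq α] {l : List α}

lemma formPerm_apply_getLast_eq_head (hne : l ≠ []) : l.formPerm (l.getLast hne) = l.head hne := by
  obtain ⟨a, t, rfl⟩ := exists_cons_of_ne_nil hne
  exact formPerm_apply_getLast a t

lemma IsChain.rel_formPerm_apply {R : α → α → Prop} (hc : l.IsChain R) (hnd : l.Nodup)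
    (hne : l ≠ []) {x : α} (hx : x ∈ l) (hx' : x ≠ l.getLast hne) : R x (l.formPerm x) := by
  obtain ⟨i, hi, rfl⟩ := mem_iff_getElem.mp hx
  have hi1 : i + 1 < l.length := by
    by_contra h
    exact hx' (by rw [getLast_eq_getElem]; congr; omega)
  rw [formPerm_apply_lt_getElem _ hnd _ hi1]
  exact hc.getElem i hi1

end FormPerm

namespace SortedLT

variable {α : Type*} [Preorder α] {l : List α}

lemma getElem_le_getElem_iff_of_preorder (hl : l.SortedLT) {i j : ℕ} (hi : i < l.length)
    (hj : j < l.length) : l[i] ≤ l[j] ↔ i ≤ j :=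
  hl.strictMono_get.le_iff_le (a := ⟨i, hi⟩) (b := ⟨j, hj⟩)

lemma isChain_setOf_mem (hl : l.SortedLT) : _root_.IsChain (· ≤ ·) {x | x ∈ l} :=
  Set.range_list_get l ▸ hl.strictMono_get.monotone.isChain_range

lemma getLast_eq_of_isMax (hl : l.SortedLT) {x : α} (hx : x ∈ l) (hmax : IsMax x) :
    l.getLast (ne_nil_of_mem hx) = x := by
  obtain ⟨i, hi, rfl⟩ := mem_iff_getElem.mp hx
  rw [getLast_eq_getElem]
  by_contra hne
  have hi' : i ≠ l.length - 1 := by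
    rintro rfl
    exact hne rfl
  have hlt : l[i] < l[l.length - 1] :=
    hl.strictMono_get (a := ⟨i, hi⟩) (b := ⟨l.length - 1, by omega⟩)
      (Fin.mk_lt_mk.mpr (by omega))
  exact hlt.not_ge (hmax hlt.le)

variable [DecidableEq α]

lemma le_formPerm_apply (hl : l.SortedLT) (hne : l ≠ []) {x : α} (hx : x ≠ l.getLast hne) :
    x ≤ l.formPerm x := by
  by_cases hxl : x ∈ l
  · exact (hl.isChain.rel_formPerm_apply hl.pairwise.nodup hne hxl hx).le
  · rw [formPerm_apply_of_notMem hxl]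

lemma le_of_lt_formPerm_apply (hl : l.SortedLT) {a x : α} (ha : a ∈ l)
    (hax : a < l.formPerm x) : a ≤ x := by
  by_cases hxl : x ∈ l
  · obtain ⟨i, hi, rfl⟩ := mem_iff_getElem.mp ha
    obtain ⟨j, hj, rfl⟩ := mem_iff_getElem.mp hxl
    rw [formPerm_apply_getElem _ hl.pairwise.nodup] at hax
    have hij := (hl.getElem_le_getElem_iff_of_preorder _ _).not.mp hax.not_ge
    rw [hl.getElem_le_getElem_iff_of_preorder]
    by_cases hj1 : j + 1 < l.length
    · rw [Nat.mod_eq_of_lt hj1] at hij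
      omega
    · rw [show j + 1 = l.length by omega, Nat.mod_self] at hij
      omega
  · rw [formPerm_apply_of_notMem hxl] at hax
    exact hax.le

end SortedLT

end List

section Relabel

variable {α : Type*} [Fintype α]

/-- The labeling whose extended promotion is `L` when its promotion chain is `cs`. -/
def depromote (L : Labeling α) (cs : List α) : Labeling α :=
  (cs.formPerm.symm.trans L).trans (finRotate _)

lemma depromote_formPerm_apply (L : Labeling α) (cs : List α) (x : α) :
    depromote L cs (cs.formPerm x) = finRotate _ (L x) := by
  simp [depromote]

def sortByLabel (L : Labeling α) (C : Set α) : List α :=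
  ((C.toFinset.image L).sort (· ≤ ·)).map L.symm

lemma mem_sortByLabel {L : Labeling α} {C : Set α} {x : α} : x ∈ sortByLabel L C ↔ x ∈ C := by
  simp [sortByLabel]

end Relabel

def IsLSucc (L : Labeling P) (v w : P) : Prop := v < w ∧ ∀ y, v < y → L w ≤ L y

lemma lSucc_eq_iff {L : Labeling P} {v w : P}
    (h : (Finset.univ.filter fun y => v < y).Nonempty) : lSucc L v h = w ↔ IsLSucc L v w := by
  have lSucc_le : ∀ y, v < y → L (lSucc L v h) ≤ L y := fun y hy => by
    rw [lSucc, Equiv.apply_symm_apply]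
    exact Finset.min'_le _ _ (Finset.mem_image_of_mem _ (by simpa using hy))
  constructor
  · rintro rfl
    exact ⟨lt_lSucc L v h, lSucc_le⟩
  · rintro ⟨hvw, hw⟩
    exact L.injective (le_antisymm (lSucc_le w hvw) (hw _ (lt_lSucc L v h)))

lemma filter_lt_nonempty_iff_not_isMax {v : P} :
    (Finset.univ.filter fun y => v < y).Nonempty ↔ ¬ IsMax v := by
  simp [Finset.filter_nonempty_iff, not_isMax_iff]

lemma promChainFrom_eq_iff {L : Labeling P} {v : P} {cs : List P} :
    promChainFrom L v = cs ↔
      cs.head? = some v ∧ cs.IsChain (IsLSucc L) ∧ ∀ w ∈ cs.getLast?, IsMax w := by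
  induction cs generalizing v with
  | nil =>
    rw [promChainFrom]
    split <;> simp
  | cons a t ih =>
    rw [promChainFrom]
    split_ifs with h
    · rw [List.cons.injEq, ih]
      rcases t with _ | ⟨b, t⟩
      · simp only [List.head?_nil, List.head?_cons, List.getLast?_singleton, reduceCtorEq,
          false_and, and_false, Option.mem_def, Option.some.injEq, false_iff, not_and]
        rintro rfl - hmax
        exact filter_lt_nonempty_iff_not_isMax.mp h (hmax _ rfl)
      · simp only [List.head?_cons, Option.some.injEq, List.isChain_cons_cons,
          List.getLast?_cons_cons, eq_comm (a := b), lSucc_eq_iff]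
        constructor
        · rintro ⟨rfl, hsucc, hchain, hmax⟩
          exact ⟨rfl, ⟨hsucc, hchain⟩, hmax⟩
        · rintro ⟨rfl, ⟨hsucc, hchain⟩, hmax⟩
          exact ⟨rfl, hsucc, hchain, hmax⟩
    · rw [filter_lt_nonempty_iff_not_isMax, not_not] at h
      rcases t with _ | ⟨b, t⟩
      · simp only [List.cons.injEq, and_true, List.head?_cons, List.getLast?_singleton,
          Option.mem_def, Option.some.injEq, List.isChain_singleton, true_and, forall_eq']
        constructor
        · rintro rfl
          exact ⟨rfl, h⟩
        · exact fun hav => hav.1.symm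
      · simp only [List.cons.injEq, reduceCtorEq, and_false, List.head?_cons,
          Option.some.injEq, List.isChain_cons_cons, false_iff, not_and]
        rintro rfl ⟨⟨hvb, -⟩, -⟩
        exact absurd (h hvb.le) hvb.not_ge

lemma sortedLT_sortByLabel {L : Labeling P} {C : Set P} (hC : IsChain (· ≤ ·) C)
    (hgold : ∀ z ∈ C, IsGolden L z) : (sortByLabel L C).SortedLT := by
  have hL : (sortByLabel L C).Pairwise fun a b => L a < L b := by
    rw [sortByLabel, List.pairwise_map]
    exact (Finset.sortedLT_sort _).pairwise.imp fun h => by simpa using h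
  refine List.sortedLT_iff_pairwise.mpr (hL.imp_of_mem fun {a b} ha hb hab => ?_)
  rw [mem_sortByLabel] at ha hb
  have hne : a ≠ b := fun h => hab.ne (congrArg L h)
  rcases hC.total ha hb with hle | hle
  · exact hle.lt_of_ne hne
  · exact absurd (hgold b hb a (hle.lt_of_ne hne.symm)) hab.not_gt

section Golden

variable [Nonempty P] {L : Labeling P} {cs : List P}

def promChain (L : Labeling P) : List P :=
  promChainFrom L (L.symm ⟨0, Fintype.card_pos⟩)

lemma promote_eq_iff {L' : Labeling P} : promote L' = L ↔ depromote L (promChain L') = L' := by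
  rw [promote, dif_pos ‹_›]
  constructor
  · rintro rfl
    exact Equiv.ext fun x => by simp [depromote, promChain]
  · intro h
    refine Equiv.ext fun x => ?_
    rw [← (finRotate _).apply_eq_iff_eq, ← depromote_formPerm_apply L (promChain L'), h]
    simp [promChain]

def IsGoldenChainThroughTop (L : Labeling P) (cs : List P) : Prop :=
  cs.SortedLT ∧ (∀ z ∈ cs, IsGolden L z) ∧ L.symm (topFin P) ∈ cs

lemma isGoldenChainThroughTop_of_promChain_depromote (hcs : promChain (depromote L cs) = cs) :
    IsGoldenChainThroughTop L cs := by
  set L' := depromote L cs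
  obtain ⟨hhead, hchain, hmax⟩ := promChainFrom_eq_iff.mp hcs
  have hne : cs ≠ [] := by rintro rfl; simp at hhead
  have hsorted : cs.SortedLT := List.sortedLT_iff_isChain.mpr (hchain.imp fun _ _ h => h.1)
  have hlast : cs.getLast hne = L.symm (topFin P) := by
    rw [Equiv.eq_symm_apply, ← (finRotate _).apply_eq_iff_eq, finRotate_topFin,
      ← depromote_formPerm_apply, List.formPerm_apply_getLast_eq_head,
      ← Equiv.eq_symm_apply]
    rwa [List.head?_eq_some_head hne, Option.some_inj] at hhead
  have htop : IsMax (L.symm (topFin P)) := hlast ▸ hmax _ (List.getLast_mem_getLast? hne)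
  refine ⟨hsorted, fun z hz y hzy => ?_, hlast ▸ List.getLast_mem hne⟩
  have eq_last_iff : ∀ x, x = cs.getLast hne ↔ L x = topFin P := fun x => by
    rw [hlast, L.eq_symm_apply]
  have hz_top : L z ≠ topFin P := by
    intro h
    obtain rfl := L.eq_symm_apply.mpr h
    exact hzy.not_ge (htop hzy.le)
  have hsucc : IsLSucc L' z (cs.formPerm z) :=
    hchain.rel_formPerm_apply hsorted.pairwise.nodup hne hz ((eq_last_iff z).not.mpr hz_top)
  by_cases hy_top : L y = topFin P
  · rw [hy_top]
    exact lt_topFin_of_ne hz_top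
  · -- `cs.formPerm y` lies above `z`, so the minimality of `L' (cs.formPerm z)` gives
    -- `L z + 1 ≤ L y + 1`.
    have hle := hsucc.2 _
      (hzy.trans_le (hsorted.le_formPerm_apply hne ((eq_last_iff y).not.mpr hy_top)))
    rw [depromote_formPerm_apply, depromote_formPerm_apply, Fin.le_def,
      val_finRotate_of_ne_topFin hz_top, val_finRotate_of_ne_topFin hy_top] at hle
    exact lt_of_le_of_ne (Fin.le_def.mpr (by omega)) (L.injective.ne hzy.ne)

lemma promChain_depromote (htop : IsMax (L.symm (topFin P)))
    (hcs : IsGoldenChainThroughTop L cs) : promChain (depromote L cs) = cs := by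
  obtain ⟨hsorted, hgold, hmem⟩ := hcs
  set L' := depromote L cs
  have hne : cs ≠ [] := List.ne_nil_of_mem hmem
  have hlast : cs.getLast hne = L.symm (topFin P) := hsorted.getLast_eq_of_isMax hmem htop
  have hhead : L' (cs.head hne) = ⟨0, Fintype.card_pos⟩ := by
    rw [← List.formPerm_apply_getLast_eq_head hne, depromote_formPerm_apply, hlast,
      Equiv.apply_symm_apply, finRotate_topFin]
  refine promChainFrom_eq_iff.mpr ⟨?_, ?_, ?_⟩
  · rw [List.head?_eq_some_head hne, ← hhead, Equiv.symm_apply_apply]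
  · rw [List.isChain_iff_getElem]
    intro i hi1
    have hlt : cs[i] < cs[i + 1] :=
      hsorted.strictMono_get (a := ⟨i, by omega⟩) (b := ⟨i + 1, hi1⟩) (Fin.mk_lt_mk.mpr (by omega))
    rw [← List.formPerm_apply_lt_getElem _ hsorted.pairwise.nodup _ hi1] at hlt ⊢
    refine ⟨hlt, fun y hzy => ?_⟩
    obtain ⟨x, rfl⟩ := cs.formPerm.surjective y
    have hzx : cs[i] ≤ x := hsorted.le_of_lt_formPerm_apply (List.getElem_mem _) hzy
    have hz_top : L cs[i] ≠ topFin P := by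
      intro h
      rw [← L.eq_symm_apply.mpr h] at htop
      exact hlt.not_ge (htop hlt.le)
    have hx_top : L x ≠ topFin P := by
      intro h
      rw [L.eq_symm_apply.mpr h, ← hlast, List.formPerm_apply_getLast_eq_head,
        List.head_eq_getElem] at hzy
      exact hzy.not_ge ((hsorted.getElem_le_getElem_iff_of_preorder _ _).mpr (Nat.zero_le i))
    have hzx' : L cs[i] ≤ L x := by
      rcases hzx.eq_or_lt with h | h
      · rw [h]
      · exact (hgold _ (List.getElem_mem _) x h).le
    rw [depromote_formPerm_apply, depromote_formPerm_apply, Fin.le_def,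
      val_finRotate_of_ne_topFin hz_top, val_finRotate_of_ne_topFin hx_top]
    rw [Fin.le_def] at hzx'
    omega
  · rw [List.getLast?_eq_some_getLast hne, hlast]
    intro w hw
    obtain rfl := Option.mem_some_iff.mp hw
    exact htop

def promotePreimageEquiv (htop : IsMax (L.symm (topFin P))) :
    {L' : Labeling P // promote L' = L} ≃ {cs : List P // IsGoldenChainThroughTop L cs} where
  toFun L' := ⟨promChain L'.1, isGoldenChainThroughTop_of_promChain_depromote
    (by rw [promote_eq_iff.mp L'.2])⟩
  invFun cs := ⟨depromote L cs.1, promote_eq_iff.mpr (by rw [promChain_depromote htop cs.2])⟩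
  left_inv L' := Subtype.ext (promote_eq_iff.mp L'.2)
  right_inv cs := Subtype.ext (promChain_depromote htop cs.2)

def goldenChainListEquiv (L : Labeling P) :
    {cs : List P // IsGoldenChainThroughTop L cs} ≃
      {C : Set P // IsChain (· ≤ ·) C ∧ (∀ z ∈ C, IsGolden L z) ∧ L.symm (topFin P) ∈ C} where
  toFun cs := ⟨{x | x ∈ cs.1}, cs.2.1.isChain_setOf_mem, cs.2.2.1, cs.2.2.2⟩
  invFun C := ⟨sortByLabel L C.1, sortedLT_sortByLabel C.2.1 C.2.2.1,
    fun z hz => C.2.2.1 z (mem_sortByLabel.mp hz), mem_sortByLabel.mpr C.2.2.2⟩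
  left_inv cs := Subtype.ext <|
    (sortedLT_sortByLabel cs.2.1.isChain_setOf_mem cs.2.2.1).eq_of_mem_iff cs.2.1
      fun _ => mem_sortByLabel
  right_inv _ := Subtype.ext (Set.ext fun _ => mem_sortByLabel)

end Golden

/-- If `L⁻¹(n)` is maximal, then the number of preimages of `L`
under extended promotion equals the number of `L`-golden chains of `P`
containing `L⁻¹(n)`. -/
theorem card_preimages_eq_golden_chains [Nonempty P] (L : Labeling P)
    (h : IsMax (L.symm (topFin P))) :
    Nat.card {L' : Labeling P // promote L' = L} =
      Nat.card {C : Set P // IsChain (· ≤ ·) C ∧ (∀ z ∈ C, IsGolden L z) ∧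
        L.symm (topFin P) ∈ C} :=
  Nat.card_congr ((promotePreimageEquiv h).trans (goldenChainListEquiv L))

end
end
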